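/- With C, K, t as in the sharpness construction (c = (k+1/2)𝟙, K = [1/2, 2k+1/2]ⁿ, t(z) = 1 − ‖z−c‖_∞/k, fibers Euclidean balls of radius t(z)), let S = C ∩ (ℤⁿ × ℝ^d) and V₀ = {k, k+1}ⁿ. Then for every y = (z, x) ∈ S there exists a closed halfspace H ⊆ ℝ^{n+d} with y ∈ H such that H ∩ (V₀ × ℝ^d) contains at most one fiber {v} × ℝ^d with v ∈ V₀; consequently h_S(y) ≤ v_d·((1 − 1/(2k))^d + T), where T = Σ_{z ∈ (K∩ℤⁿ)\V₀} t(z)^d. -/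

import Mathlib

open MeasureTheory Set Metric
open scoped ENNReal

/-- The center `c = (k + 1/2)(1,…,1)` of the sharpness construction. -/
noncomputable def constrCenter (n : ℕ) (k : ℕ) : Fin n → ℝ := fun _ => (k : ℝ) + 1 / 2

/-- The box `K = [1/2, 2k + 1/2]ⁿ`. -/
def constrK (n : ℕ) (k : ℕ) : Set (Fin n → ℝ) :=
  {z | ∀ i, 1 / 2 ≤ z i ∧ z i ≤ 2 * (k : ℝ) + 1 / 2}

/-- The slice radius `t(z) = 1 − ‖z − c‖_∞ / k` (here `Fin n → ℝ` carries the sup norm). -/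
noncomputable def constrT (n : ℕ) (k : ℕ) (z : Fin n → ℝ) : ℝ :=
  1 - (1 / (k : ℝ)) * ‖z - constrCenter n k‖

/-- The sharpness construction body `C`, with Euclidean-ball fibers of radius `t(z)`. -/
noncomputable def constrC (n d : ℕ) (k : ℕ) :
    Set ((Fin n → ℝ) × EuclideanSpace ℝ (Fin d)) :=
  {p | p.1 ∈ constrK n k ∧ ‖p.2‖ ≤ constrT n k p.1}

/-- The mixed-integer volume `H_d(A) = Σ_{z ∈ ℤⁿ} vol_d(A_z)` (Euclidean fibers). -/
noncomputable def mixVolE (n d : ℕ)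
    (A : Set ((Fin n → ℝ) × EuclideanSpace ℝ (Fin d))) : ℝ≥0∞ :=
  ∑' z : Fin n → ℤ,
    volume {x : EuclideanSpace ℝ (Fin d) | ((fun i => (z i : ℝ)), x) ∈ A}

/-- The mixed-integer lattice `ℤⁿ × ℝ^d`. -/
def mixLatticeE (n d : ℕ) : Set ((Fin n → ℝ) × EuclideanSpace ℝ (Fin d)) :=
  {p | ∃ z : Fin n → ℤ, p.1 = fun i => (z i : ℝ)}

/-- The standard bilinear pairing on `ℝⁿ × ℝ^d`. -/
noncomputable def dotPE (n d : ℕ)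
    (a y : (Fin n → ℝ) × EuclideanSpace ℝ (Fin d)) : ℝ :=
  (∑ i, a.1 i * y.1 i) + ∑ j, a.2 j * y.2 j

/-- The mixed-integer halfspace depth. -/
noncomputable def depthE (n d : ℕ) (S : Set ((Fin n → ℝ) × EuclideanSpace ℝ (Fin d)))
    (y : (Fin n → ℝ) × EuclideanSpace ℝ (Fin d)) : ℝ≥0∞ :=
  ⨅ (a : (Fin n → ℝ) × EuclideanSpace ℝ (Fin d)) (c : ℝ) (_ : a ≠ 0)
    (_ : c ≤ dotPE n d a y),
    mixVolE n d (S ∩ {u | c ≤ dotPE n d a u})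

/-- The central integer cube `V₀ = {k, k+1}ⁿ`. -/
def constrV₀ (n : ℕ) (k : ℕ) : Set (Fin n → ℤ) :=
  {v | ∀ i, v i = (k : ℤ) ∨ v i = (k : ℤ) + 1}

/-!
Take `σᵢ = 2(zᵢ − k) − 1` for every integer point `z`, not only for `z ∈ V₀`: for an integer
`zᵢ` and `vᵢ ∈ {k, k+1}` the product `σᵢ (zᵢ − vᵢ)` is positive unless `vᵢ = zᵢ`, so the
halfspace `σ·u ≥ σ·z` meets `V₀ × ℝ^d` at most in the fiber over `z`. Every fiber of `S` lies in
a ball of radius `t`, and `t = 1 − 1/(2k)` on `V₀`; the remaining fibers of `S` in the halfspace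
lie over `(K ∩ ℤⁿ) \ V₀`.
-/

lemma ENNReal.mul_ofReal_add_tsum_ofReal {ι : Type*} [Finite ι] {B : ℝ≥0∞} (hB : B ≠ ⊤)
    {a : ℝ} (ha : 0 ≤ a) {f : ι → ℝ} (hf : ∀ i, 0 ≤ f i) :
    B * (ENNReal.ofReal a + ∑' i, ENNReal.ofReal (f i)) =
      ENNReal.ofReal (B.toReal * (a + ∑' i, f i)) := by
  rw [← ENNReal.ofReal_tsum_of_nonneg hf .of_finite, ← ENNReal.ofReal_add ha (tsum_nonneg hf),
    ENNReal.ofReal_mul ENNReal.toReal_nonneg, ENNReal.ofReal_toReal hB]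

lemma addHaar_closedBall_le {E : Type*} [NormedAddCommGroup E] [NormedSpace ℝ E]
    [MeasurableSpace E] [BorelSpace E] [FiniteDimensional ℝ E] (μ : Measure E)
    [μ.IsAddHaarMeasure] (x : E) (r : ℝ) :
    μ (closedBall x r) ≤ ENNReal.ofReal (r ^ Module.finrank ℝ E) * μ (closedBall 0 1) := by
  rcases le_or_gt 0 r with hr | hr
  · exact (Measure.addHaar_closedBall' μ x hr).le
  · simp [closedBall_eq_empty.2 hr]

lemma depthE_le_mixVolE {n d : ℕ} {S : Set ((Fin n → ℝ) × EuclideanSpace ℝ (Fin d))}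
    {a y : (Fin n → ℝ) × EuclideanSpace ℝ (Fin d)} {c : ℝ} (ha : a ≠ 0)
    (hc : c ≤ dotPE n d a y) :
    depthE n d S y ≤ mixVolE n d (S ∩ {u | c ≤ dotPE n d a u}) :=
  iInf₂_le_of_le a c (iInf₂_le_of_le ha hc le_rfl)

lemma two_mul_sub_sub_one_mul_sub_pos {a b k : ℤ} (hb : b = k ∨ b = k + 1) (hab : a ≠ b) :
    0 < (2 * (a - k) - 1) * (a - b) := by
  rcases hb with rfl | rfl <;> rcases lt_or_gt_of_ne hab with h | h <;> nlinarith

noncomputable def isolatingNormal {n : ℕ} (d k : ℕ) (z : Fin n → ℤ) :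
    (Fin n → ℝ) × EuclideanSpace ℝ (Fin d) :=
  (fun i => 2 * ((z i : ℝ) - k) - 1, 0)

section Isolation

variable {n d k : ℕ}

lemma isolatingNormal_ne_zero (hn : 1 ≤ n) (z : Fin n → ℤ) : isolatingNormal d k z ≠ 0 := by
  intro h
  have h0 := congrFun (congrArg Prod.fst h) ⟨0, hn⟩
  simp only [isolatingNormal, Prod.fst_zero, Pi.zero_apply] at h0
  have : (2 * (z ⟨0, hn⟩ - k) - 1 : ℤ) ≠ 0 := by omega
  exact this (by exact_mod_cast h0)

lemma dotPE_isolatingNormal (z : Fin n → ℤ) (w : Fin n → ℝ) (x : EuclideanSpace ℝ (Fin d)) :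
    dotPE n d (isolatingNormal d k z) (w, x) = ∑ i, (2 * ((z i : ℝ) - k) - 1) * w i := by
  simp [dotPE, isolatingNormal]

lemma dotPE_isolatingNormal_lt {z v : Fin n → ℤ} (hv : v ∈ constrV₀ n k) (hvz : v ≠ z)
    (x x' : EuclideanSpace ℝ (Fin d)) :
    dotPE n d (isolatingNormal d k z) ((fun i => (v i : ℝ)), x') <
      dotPE n d (isolatingNormal d k z) ((fun i => (z i : ℝ)), x) := by
  rw [← sub_pos, dotPE_isolatingNormal, dotPE_isolatingNormal, ← Finset.sum_sub_distrib]
  have hterm : ∀ i, (2 * ((z i : ℝ) - k) - 1) * z i - (2 * ((z i : ℝ) - k) - 1) * v i =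
      ((2 * (z i - k) - 1) * (z i - v i) : ℤ) := by
    intro i; push_cast; ring
  simp only [hterm]
  obtain ⟨i, hi⟩ := Function.ne_iff.1 hvz
  refine Finset.sum_pos' (fun j _ => ?_) ⟨i, Finset.mem_univ i, ?_⟩
  · rcases eq_or_ne (z j) (v j) with h | h
    · simp [h]
    · exact_mod_cast (two_mul_sub_sub_one_mul_sub_pos (hv j) h).le
  · exact_mod_cast two_mul_sub_sub_one_mul_sub_pos (hv i) (Ne.symm hi)

lemma eq_of_mem_constrV₀_of_le_dotPE {z v : Fin n → ℤ} (hv : v ∈ constrV₀ n k)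
    {x x' : EuclideanSpace ℝ (Fin d)}
    (h : dotPE n d (isolatingNormal d k z) ((fun i => (z i : ℝ)), x) ≤
      dotPE n d (isolatingNormal d k z) ((fun i => (v i : ℝ)), x')) : v = z := by
  by_contra hvz
  exact (dotPE_isolatingNormal_lt hv hvz x x').not_ge h

end Isolation

section Volume

variable {n d k : ℕ}

lemma constrT_nonneg {w : Fin n → ℝ} (hw : w ∈ constrK n k) : 0 ≤ constrT n k w := by
  have hnorm : ‖w - constrCenter n k‖ ≤ k := by
    refine (pi_norm_le_iff_of_nonneg k.cast_nonneg).2 fun i => ?_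
    rw [Real.norm_eq_abs, abs_le]
    simp only [Pi.sub_apply, constrCenter]
    constructor <;> linarith [hw i]
  have : 1 / (k : ℝ) * ‖w - constrCenter n k‖ ≤ 1 :=
    calc 1 / (k : ℝ) * ‖w - constrCenter n k‖ ≤ 1 / k * k := by gcongr
      _ = k / k := one_div_mul_eq_div _ _
      _ ≤ 1 := div_self_le_one _
  rw [constrT]; linarith

lemma constrT_of_mem_constrV₀ (hn : 1 ≤ n) {v : Fin n → ℤ} (hv : v ∈ constrV₀ n k) :
    constrT n k (fun i => (v i : ℝ)) = 1 - 1 / (2 * (k : ℝ)) := by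
  have habs : ∀ i, ‖((fun i => (v i : ℝ)) - constrCenter n k) i‖ = 1 / 2 := by
    intro i
    rcases hv i with h | h <;> norm_num [constrCenter, h]
  have hnorm : ‖(fun i => (v i : ℝ)) - constrCenter n k‖ = 1 / 2 :=
    le_antisymm ((pi_norm_le_iff_of_nonneg (by norm_num)).2 fun i => (habs i).le)
      (habs ⟨0, hn⟩ ▸ norm_le_pi_norm _ _)
  rw [constrT, hnorm]; field_simp

lemma finite_constrK_int :
    {z : Fin n → ℤ | (fun i => (z i : ℝ)) ∈ constrK n k}.Finite := by
  refine (Set.finite_Icc (0 : Fin n → ℤ) (fun _ => 2 * k + 1)).subset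
    fun z hz => ⟨fun i => ?_, fun i => ?_⟩
  · have : (-1 : ℝ) < z i := by linarith [(hz i).1]
    have : (-1 : ℤ) < z i := by exact_mod_cast this
    simp only [Pi.zero_apply]; omega
  · have : (z i : ℝ) < 2 * k + 2 := by linarith [(hz i).2]
    have : z i < 2 * k + 2 := by exact_mod_cast this
    show z i ≤ 2 * k + 1
    omega

lemma mixVolE_inter_isolatingHalfspace_le (hn : 1 ≤ n) (z : Fin n → ℤ)
    (x : EuclideanSpace ℝ (Fin d)) :
    mixVolE n d (constrC n d k ∩ mixLatticeE n d ∩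
        {u | dotPE n d (isolatingNormal d k z) ((fun i => (z i : ℝ)), x) ≤
          dotPE n d (isolatingNormal d k z) u}) ≤
      volume (closedBall (0 : EuclideanSpace ℝ (Fin d)) 1) *
        (ENNReal.ofReal ((1 - 1 / (2 * (k : ℝ))) ^ d) +
          ∑' z' : {z' : Fin n → ℤ // (fun i => (z' i : ℝ)) ∈ constrK n k ∧ z' ∉ constrV₀ n k},
            ENNReal.ofReal (constrT n k (fun i => ((z' : Fin n → ℤ) i : ℝ)) ^ d)) := by
  set H := {u | dotPE n d (isolatingNormal d k z) ((fun i => (z i : ℝ)), x) ≤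
    dotPE n d (isolatingNormal d k z) u}
  set F : (Fin n → ℤ) → ℝ≥0∞ := fun z' => ENNReal.ofReal (constrT n k (fun i => (z' i : ℝ)) ^ d)
  set O := {z' : Fin n → ℤ | (fun i => (z' i : ℝ)) ∈ constrK n k ∧ z' ∉ constrV₀ n k}
  have hfiber : ∀ z' : Fin n → ℤ,
      volume {x' | ((fun i => (z' i : ℝ)), x') ∈ constrC n d k ∩ mixLatticeE n d ∩ H} ≤
        volume (closedBall (0 : EuclideanSpace ℝ (Fin d)) 1) *
          ((if z' = z then ENNReal.ofReal ((1 - 1 / (2 * (k : ℝ))) ^ d) else 0) +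
            O.indicator F z') := by
    intro z'
    set fiber := {x' | ((fun i => (z' i : ℝ)), x') ∈ constrC n d k ∩ mixLatticeE n d ∩ H}
    rcases fiber.eq_empty_or_nonempty with hempty | ⟨x', ⟨⟨hK, -⟩, -⟩, hH⟩
    · rw [hempty, measure_empty]; exact zero_le
    have hball : volume fiber ≤ volume (closedBall (0 : EuclideanSpace ℝ (Fin d)) 1) * F z' := by
      rw [mul_comm]
      refine (measure_mono (t := closedBall 0 (constrT n k fun i => (z' i : ℝ)))
        fun x'' hx'' => mem_closedBall_zero_iff.2 hx''.1.1.2).trans ?_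
      simpa using addHaar_closedBall_le volume (0 : EuclideanSpace ℝ (Fin d)) _
    by_cases hV : z' ∈ constrV₀ n k
    · obtain rfl := eq_of_mem_constrV₀_of_le_dotPE hV hH
      rw [if_pos rfl, ← constrT_of_mem_constrV₀ hn hV]
      exact hball.trans (by gcongr; exact le_self_add)
    · rw [indicator_of_mem (show z' ∈ O from ⟨hK, hV⟩)]
      exact hball.trans (by gcongr; exact le_add_self)
  calc _ ≤ _ := ENNReal.tsum_le_tsum hfiber
    _ = _ := by rw [ENNReal.tsum_mul_left, ENNReal.tsum_add, tsum_ite_eq, ← tsum_subtype]; rfl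

end Volume

theorem construction_depth_bound_general (n d k : ℕ) (hn : 1 ≤ n) :
    ∀ y ∈ constrC n d k ∩ mixLatticeE n d,
      (∃ (a : (Fin n → ℝ) × EuclideanSpace ℝ (Fin d)) (c : ℝ), a ≠ 0 ∧
        c ≤ dotPE n d a y ∧
        {v : Fin n → ℤ | v ∈ constrV₀ n k ∧
          ∃ x : EuclideanSpace ℝ (Fin d),
            c ≤ dotPE n d a ((fun i => (v i : ℝ)), x)}.Subsingleton) ∧
      depthE n d (constrC n d k ∩ mixLatticeE n d) y ≤
        ENNReal.ofReal
          ((volume (closedBall (0 : EuclideanSpace ℝ (Fin d)) 1)).toReal *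
            ((1 - 1 / (2 * (k : ℝ))) ^ d +
              ∑' z : {z : Fin n → ℤ //
                  (fun i => (z i : ℝ)) ∈ constrK n k ∧ z ∉ constrV₀ n k},
                constrT n k (fun i => ((z : Fin n → ℤ) i : ℝ)) ^ d)) := by
  rintro ⟨w, x⟩ ⟨-, z, rfl : w = _⟩
  have ha : isolatingNormal d k z ≠ 0 := isolatingNormal_ne_zero hn z
  refine ⟨⟨_, _, ha, le_rfl, ?_⟩, ?_⟩
  · rintro v ⟨hv, _, hvx⟩ v' ⟨hv', _, hvx'⟩
    rw [eq_of_mem_constrV₀_of_le_dotPE hv hvx, eq_of_mem_constrV₀_of_le_dotPE hv' hvx']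
  · have : Finite {z' : Fin n → ℤ // (fun i => (z' i : ℝ)) ∈ constrK n k ∧ z' ∉ constrV₀ n k} :=
      (finite_constrK_int.subset fun _ h => h.1).to_subtype
    have hA : 0 ≤ (1 - 1 / (2 * (k : ℝ))) ^ d :=
      pow_nonneg (sub_nonneg.2 (by simpa using Nat.cast_inv_le_one (α := ℝ) (2 * k))) d
    calc _ ≤ _ := depthE_le_mixVolE ha le_rfl
      _ ≤ _ := mixVolE_inter_isolatingHalfspace_le hn z x
      _ = _ := ENNReal.mul_ofReal_add_tsum_ofReal measure_closedBall_lt_top.ne hA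
        fun z' => pow_nonneg (constrT_nonneg z'.2.1) d

/-- In the sharpness construction, every point of `S` lies in a closed halfspace meeting at
most one central fiber, so its depth is at most `v_d·((1 − 1/(2k))^d + T)`. -/
theorem construction_depth_bound (n d k : ℕ) (hn : 1 ≤ n) (hd : 1 ≤ d) (hk : 2 ≤ k) :
    ∀ y ∈ constrC n d k ∩ mixLatticeE n d,
      (∃ (a : (Fin n → ℝ) × EuclideanSpace ℝ (Fin d)) (c : ℝ), a ≠ 0 ∧
        c ≤ dotPE n d a y ∧
        {v : Fin n → ℤ | v ∈ constrV₀ n k ∧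
          ∃ x : EuclideanSpace ℝ (Fin d),
            c ≤ dotPE n d a ((fun i => (v i : ℝ)), x)}.Subsingleton) ∧
      depthE n d (constrC n d k ∩ mixLatticeE n d) y ≤
        ENNReal.ofReal
          ((volume (closedBall (0 : EuclideanSpace ℝ (Fin d)) 1)).toReal *
            ((1 - 1 / (2 * (k : ℝ))) ^ d +
              ∑' z : {z : Fin n → ℤ //
                  (fun i => (z i : ℝ)) ∈ constrK n k ∧ z ∉ constrV₀ n k},
                constrT n k (fun i => ((z : Fin n → ℤ) i : ℝ)) ^ d)) :=
  construction_depth_bound_general n d k hn
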